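/- In any stable matching M of the extended instance I'_{3,3}(B), every hospital in L ∪ Y is matched and every resident in K ∪ X is matched, where X = {x_{4i+r}}, K = {k_{4i+r}}, Y = {y_{4i+r}} and L = {l_{4i+r}} for 0≤i≤n−1 and 0≤r≤3. -/

import Mathlib

/-- A one-to-one HRC instance: residents are partitioned into single residents and
ordered couples; all hospitals have capacity 1. -/
structure HRC1 (R H : Type) where
  singles : List R
  couples : List (R × R)
  singlePref : R → List H
  couplePref : R × R → List (H × H)
  hospPref : H → List R

namespace HRC1

/-- `x` precedes `y` on the strict preference list `l`. -/
def Prefers {α : Type} [DecidableEq α] (l : List α) (x y : α) : Prop :=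
  x ∈ l ∧ y ∈ l ∧ l.idxOf x < l.idxOf y

variable {R H : Type} [DecidableEq R] [DecidableEq H]

/-- `M` is a matching of the instance `I`. -/
def IsMatching (I : HRC1 R H) (M : R → Option H) : Prop :=
  (∀ r₁ r₂ h, M r₁ = some h → M r₂ = some h → r₁ = r₂) ∧
  (∀ r ∈ I.singles, ∀ h, M r = some h → h ∈ I.singlePref r) ∧
  (∀ c ∈ I.couples,
    (M c.1 = none ∧ M c.2 = none) ∨
    ∃ hp ∈ I.couplePref c, M c.1 = some hp.1 ∧ M c.2 = some hp.2) ∧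
  (∀ r, (M r).isSome → r ∈ I.singles ∨ ∃ c ∈ I.couples, r = c.1 ∨ r = c.2)

/-- Hospital `h` is unmatched in `M`. -/
def HospFree (M : R → Option H) (h : H) : Prop := ∀ r, M r ≠ some h

/-- Hospital `h` is unmatched in `M`, or prefers `r` to its current assignee. -/
def HospOpenFor (I : HRC1 R H) (M : R → Option H) (h : H) (r : R) : Prop :=
  HospFree M h ∨ ∃ r', M r' = some h ∧ Prefers (I.hospPref h) r r'

/-- Blocking pair consisting of a single resident `r` and a hospital `h`. -/
def BlockSingle (I : HRC1 R H) (M : R → Option H) (r : R) (h : H) : Prop :=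
  r ∈ I.singles ∧ h ∈ I.singlePref r ∧
  (M r = none ∨ ∃ h', M r = some h' ∧ Prefers (I.singlePref r) h h') ∧
  I.HospOpenFor M h r

/-- Blocking pair consisting of a couple `c` and a pair of hospitals `hp` on its joint list. -/
def BlockCouple (I : HRC1 R H) (M : R → Option H) (c : R × R) (hp : H × H) : Prop :=
  c ∈ I.couples ∧ hp ∈ I.couplePref c ∧
  ((M c.1 = none ∧ M c.2 = none) ∨
    ∃ hp' ∈ I.couplePref c, M c.1 = some hp'.1 ∧ M c.2 = some hp'.2 ∧
      Prefers (I.couplePref c) hp hp') ∧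
  (M c.1 = some hp.1 ∨ I.HospOpenFor M hp.1 c.1) ∧
  (M c.2 = some hp.2 ∨ I.HospOpenFor M hp.2 c.2)

/-- `M` is a stable matching of the instance `I`. -/
def Stable (I : HRC1 R H) (M : R → Option H) : Prop :=
  I.IsMatching M ∧ (∀ r h, ¬ I.BlockSingle M r h) ∧ (∀ c hp, ¬ I.BlockCouple M c hp)

end HRC1

/-- An instance of (2,2)-E3-SAT: `m` clauses, each with exactly 3 literals over `n`
variables (a literal is a variable together with a polarity, `true` for positive);
`occ l` enumerates the two occurrences of the literal `l`, so that each of the literals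
`vᵢ` and `¬vᵢ` appears exactly twice. -/
structure E3SAT (n m : ℕ) where
  clause : Fin m → Fin 3 → Fin n × Bool
  occ : Fin n × Bool → Fin 2 → Fin m × Fin 3
  occ_spec : ∀ l r, clause (occ l r).1 (occ l r).2 = l
  occ_inj : ∀ l, occ l 0 ≠ occ l 1
  occ_surj : ∀ j s, ∃ r, occ (clause j s) r = (j, s)

namespace E3SAT

variable {n m : ℕ}

/-- `B` is satisfiable. -/
def Satisfiable (B : E3SAT n m) : Prop :=
  ∃ f : Fin n → Bool, ∀ j : Fin m, ∃ s : Fin 3, f (B.clause j s).1 = (B.clause j s).2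

/-- The index (`0` or `1`) of the occurrence of its literal that position `s` of
clause `j` constitutes. -/
def rIdx (B : E3SAT n m) (j : Fin m) (s : Fin 3) : Fin 2 :=
  if B.occ (B.clause j s) 0 = (j, s) then 0 else 1

end E3SAT

/-- Residents of the extended instance `I′₃₃(B)`: `X i r = x_{4i+r}`, `K i r = k_{4i+r}`,
`P j s = p_j^{s+1}`, `Q j = q_{j+1}`, `T j = t_{j+1}`, `U i r s = u^{s+1}_{4i+r}`
(0-based indices). -/
inductive Res3E (n m : ℕ)
  | X (i : Fin n) (r : Fin 4)
  | K (i : Fin n) (r : Fin 4)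
  | P (j : Fin m) (s : Fin 6)
  | Q (j : Fin m)
  | T (j : Fin m)
  | U (i : Fin n) (r : Fin 4) (s : Fin 5)
deriving DecidableEq

/-- Hospitals of the extended instance `I′₃₃(B)`: `Y i r = y_{4i+r}`, `L i r = l_{4i+r}`,
`C j s = c_j^{s+1}`, `Z j r = z_j^{r+1}`, `Hh i r s = h^{s+1}_{4i+r}` (0-based indices). -/
inductive Hos3E (n m : ℕ)
  | Y (i : Fin n) (r : Fin 4)
  | L (i : Fin n) (r : Fin 4)
  | C (j : Fin m) (s : Fin 3)
  | Z (j : Fin m) (r : Fin 5)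
  | Hh (i : Fin n) (r : Fin 4) (s : Fin 4)
deriving DecidableEq

variable {n m : ℕ}

/-- The hospital `c(x_{4i+r})`: for `r ∈ {0,1}` the clause hospital of the `(r+1)`-th
occurrence of `vᵢ`; for `r ∈ {2,3}` that of the `(r−1)`-th occurrence of `¬vᵢ`. -/
def cX (B : E3SAT n m) (i : Fin n) (r : Fin 4) : Hos3E n m :=
  have hr := r.isLt
  let o := B.occ (i, decide (r.val < 2)) ⟨r.val % 2, by omega⟩
  Hos3E.C o.1 o.2

/-- The resident `x(c_j^{s+1})` corresponding to the literal at position `s` of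
clause `c_j`. -/
def xOfC (B : E3SAT n m) (j : Fin m) (s : Fin 3) : Res3E n m :=
  let l := B.clause j s
  have hv : (B.rIdx j s).val < 2 := (B.rIdx j s).isLt
  if l.2 then Res3E.X l.1 ⟨(B.rIdx j s).val, by omega⟩
  else Res3E.X l.1 ⟨(B.rIdx j s).val + 2, by omega⟩

/-- The extended one-to-one HRC instance `I′₃₃(B)` constructed from the
(2,2)-E3-SAT instance `B`. -/
def instI33E (B : E3SAT n m) : HRC1 (Res3E n m) (Hos3E n m) where
  singles :=
    ((List.finRange m).map fun j => Res3E.Q j) ++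
    ((List.finRange m).map fun j => Res3E.T j) ++
    ((List.finRange n).flatMap fun i =>
      (List.finRange 4).map fun r => Res3E.U i r 4)
  couples :=
    ((List.finRange n).flatMap fun i =>
      (List.finRange 4).map fun r => (Res3E.X i r, Res3E.K i r)) ++
    ((List.finRange m).flatMap fun j =>
      (List.finRange 3).map fun s =>
        (Res3E.P j ⟨s.val, by have := s.isLt; omega⟩,
         Res3E.P j ⟨s.val + 3, by have := s.isLt; omega⟩)) ++
    ((List.finRange n).flatMap fun i =>
      (List.finRange 4).flatMap fun r =>
        [(Res3E.U i r 0, Res3E.U i r 1), (Res3E.U i r 2, Res3E.U i r 3)])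
  singlePref := fun r => match r with
    | Res3E.Q j => [Hos3E.C j 0, Hos3E.C j 1, Hos3E.C j 2]
    | Res3E.T j => [Hos3E.Z j 2, Hos3E.Z j 3, Hos3E.Z j 4]
    | Res3E.U i r s => if s = 4 then [Hos3E.Y i r, Hos3E.Hh i r 0] else []
    | _ => []
  couplePref := fun c => match c with
    | (Res3E.X i r, Res3E.K i' r') =>
        if i' = i ∧ r' = r then
          if r = 0 then
            [(Hos3E.Y i 0, Hos3E.L i 0), (cX B i 0, Hos3E.L i 1),
             (Hos3E.Y i 1, Hos3E.L i 1)]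
          else if r = 1 then
            [(Hos3E.Y i 1, Hos3E.L i 1), (cX B i 1, Hos3E.L i 2),
             (Hos3E.Y i 2, Hos3E.L i 2)]
          else if r = 2 then
            [(Hos3E.Y i 3, Hos3E.L i 3), (cX B i 2, Hos3E.L i 2),
             (Hos3E.Y i 2, Hos3E.L i 2)]
          else
            [(Hos3E.Y i 0, Hos3E.L i 0), (cX B i 3, Hos3E.L i 3),
             (Hos3E.Y i 3, Hos3E.L i 3)]
        else []
    | (Res3E.P j s, Res3E.P j' s') =>
        if hc : j' = j ∧ s.val < 3 ∧ s'.val = s.val + 3 then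
          [(Hos3E.Z j 0, Hos3E.Z j 1),
           (Hos3E.C j ⟨s.val, hc.2.1⟩, Hos3E.Z j ⟨s.val + 2, by have := hc.2.1; omega⟩)]
        else []
    | (Res3E.U i r s, Res3E.U i' r' s') =>
        if i' = i ∧ r' = r then
          if s = 0 ∧ s' = 1 then [(Hos3E.Hh i r 0, Hos3E.Hh i r 1)]
          else if s = 2 ∧ s' = 3 then
            [(Hos3E.Hh i r 0, Hos3E.Hh i r 3), (Hos3E.Hh i r 2, Hos3E.Hh i r 1)]
          else []
        else []
    | _ => []
  hospPref := fun hh => match hh with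
    | Hos3E.Y i r =>
        (if r = 0 then [Res3E.X i 0, Res3E.X i 3]
         else if r = 1 then [Res3E.X i 1, Res3E.X i 0]
         else if r = 2 then [Res3E.X i 1, Res3E.X i 2]
         else [Res3E.X i 2, Res3E.X i 3]) ++ [Res3E.U i r 4]
    | Hos3E.L i r =>
        if r = 0 then [Res3E.K i 3, Res3E.K i 0]
        else if r = 1 then [Res3E.K i 0, Res3E.K i 1]
        else if r = 2 then [Res3E.K i 2, Res3E.K i 1]
        else [Res3E.K i 3, Res3E.K i 2]
    | Hos3E.C j s =>
        [Res3E.P j ⟨s.val, by have := s.isLt; omega⟩, xOfC B j s, Res3E.Q j]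
    | Hos3E.Z j r =>
        if r = 0 then [Res3E.P j 0, Res3E.P j 1, Res3E.P j 2]
        else if r = 1 then [Res3E.P j 5, Res3E.P j 4, Res3E.P j 3]
        else if r = 2 then [Res3E.P j 3, Res3E.T j]
        else if r = 3 then [Res3E.P j 4, Res3E.T j]
        else [Res3E.P j 5, Res3E.T j]
    | Hos3E.Hh i r s =>
        if s = 0 then [Res3E.U i r 4, Res3E.U i r 0, Res3E.U i r 2]
        else if s = 1 then [Res3E.U i r 3, Res3E.U i r 1]
        else if s = 2 then [Res3E.U i r 2]
        else [Res3E.U i r 3]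

/-! The gadget `u¹, …, u⁵, h¹, …, h⁴` attached to `y_{4i+r}` has no stable configuration
unless `u⁵` holds `h¹`: otherwise the couples `(u¹,u²)` and `(u³,u⁴)` chase each other
around `h¹` and `h²`. As `u⁵` prefers `y_{4i+r}` to `h¹`, stability forces `y_{4i+r}` to
hold a resident it ranks above `u⁵`, i.e. some `x_{4i+a}`, whose partner `k_{4i+a}` then
holds `l_{4i+r}`. For fixed `i` the map `r ↦ a` is injective on four indices, hence
bijective, so every `x` and `k` is matched as well. -/

namespace HRC1

variable {R H : Type} {I : HRC1 R H} {M : R → Option H}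

theorem IsMatching.eq_some_cases (hM : I.IsMatching M) {r : R} {h : H} (hr : M r = some h) :
    (r ∈ I.singles ∧ h ∈ I.singlePref r) ∨
    ∃ c ∈ I.couples, ∃ hp ∈ I.couplePref c,
      (r = c.1 ∧ h = hp.1 ∧ M c.2 = some hp.2) ∨ (r = c.2 ∧ h = hp.2 ∧ M c.1 = some hp.1) := by
  obtain ⟨-, hsingle, hcouple, hcover⟩ := hM
  rcases hcover r (by simp [hr]) with hs | ⟨c, hc, rfl | rfl⟩
  · exact Or.inl ⟨hs, hsingle r hs h hr⟩
  all_goals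
    rcases hcouple c hc with ⟨h₁, h₂⟩ | ⟨hp, hhp, h₁, h₂⟩
    · simp_all
    · refine Or.inr ⟨c, hc, hp, hhp, ?_⟩
      simp_all

end HRC1

namespace instI33E

open Res3E Hos3E

variable {B : E3SAT n m} {M : Res3E n m → Option (Hos3E n m)} {i : Fin n} {r : Fin 4}

theorem mem_singles_cases {res : Res3E n m} (hs : res ∈ (instI33E B).singles) :
    (∃ j, res = Q j) ∨ (∃ j, res = T j) ∨ ∃ i r, res = U i r 4 := by
  simp only [instI33E, List.mem_append, List.mem_flatMap, List.mem_map,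
    List.mem_finRange, true_and] at hs
  rcases hs with (⟨j, rfl⟩ | ⟨j, rfl⟩) | ⟨i, r, rfl⟩ <;> simp

theorem mem_couples_cases {c : Res3E n m × Res3E n m} (hc : c ∈ (instI33E B).couples) :
    (∃ i a, c = (X i a, K i a)) ∨
    (∃ (j : Fin m) (s : Fin 3), c = (P j ⟨s, by omega⟩, P j ⟨s + 3, by omega⟩)) ∨
    ∃ i r, c = (U i r 0, U i r 1) ∨ c = (U i r 2, U i r 3) := by
  simp only [instI33E, List.mem_append, List.mem_flatMap, List.mem_map,
    List.mem_finRange, List.mem_cons, List.not_mem_nil, or_false, true_and] at hc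
  rcases hc with (⟨i, a, rfl⟩ | ⟨j, s, rfl⟩) | ⟨i, r, h⟩
  · exact Or.inl ⟨i, a, rfl⟩
  · exact Or.inr (Or.inl ⟨j, s, rfl⟩)
  · exact Or.inr (Or.inr ⟨i, r, h⟩)

theorem eq_U_of_eq_Hh (hM : (instI33E B).IsMatching M) {res : Res3E n m} {s : Fin 4}
    (hres : M res = some (Hh i r s)) : ∃ t, res = U i r t := by
  rcases hM.eq_some_cases hres with ⟨hs, hh⟩ | ⟨c, hc, hp, hhp, hcase⟩
  · rcases mem_singles_cases hs with ⟨j, rfl⟩ | ⟨j, rfl⟩ | ⟨i', r', rfl⟩ <;>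
      simp_all [instI33E]
  · rcases mem_couples_cases hc with ⟨i', a, rfl⟩ | ⟨j, s', rfl⟩ | ⟨i', r', rfl | rfl⟩
    · fin_cases a <;> simp [instI33E, cX] at hhp <;> rcases hhp with rfl | rfl | rfl <;>
        simp_all
    all_goals
      simp [instI33E] at hhp
      rcases hhp with rfl | rfl <;> rcases hcase with ⟨rfl, h, -⟩ | ⟨rfl, h, -⟩ <;>
        simp_all

theorem eq_U_or_X_of_eq_Y (hM : (instI33E B).IsMatching M) {res : Res3E n m}
    (hres : M res = some (Y i r)) :
    res = U i r 4 ∨ ∃ a, res = X i a ∧ M (K i a) = some (L i r) := by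
  rcases hM.eq_some_cases hres with ⟨hs, hh⟩ | ⟨c, hc, hp, hhp, hcase⟩
  · rcases mem_singles_cases hs with ⟨j, rfl⟩ | ⟨j, rfl⟩ | ⟨i', r', rfl⟩ <;>
      simp_all [instI33E]
  · rcases mem_couples_cases hc with ⟨i', a, rfl⟩ | ⟨j, s', rfl⟩ | ⟨i', r', rfl | rfl⟩
    · fin_cases a <;> simp [instI33E, cX] at hhp <;> rcases hhp with rfl | rfl | rfl <;>
        rcases hcase with ⟨rfl, h, hK⟩ | ⟨rfl, h, hK⟩ <;> simp_all
    all_goals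
      simp [instI33E] at hhp
      rcases hhp with rfl | rfl <;> simp_all

theorem U01_cases (hM : (instI33E B).IsMatching M) :
    (M (U i r 0) = none ∧ M (U i r 1) = none) ∨
    (M (U i r 0) = some (Hh i r 0) ∧ M (U i r 1) = some (Hh i r 1)) := by
  obtain ⟨-, -, hcouple, -⟩ := hM
  simpa [instI33E] using hcouple (U i r 0, U i r 1) (by simp [instI33E])

theorem U23_cases (hM : (instI33E B).IsMatching M) :
    (M (U i r 2) = none ∧ M (U i r 3) = none) ∨
    (M (U i r 2) = some (Hh i r 0) ∧ M (U i r 3) = some (Hh i r 3)) ∨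
    (M (U i r 2) = some (Hh i r 2) ∧ M (U i r 3) = some (Hh i r 1)) := by
  obtain ⟨-, -, hcouple, -⟩ := hM
  simpa [instI33E] using hcouple (U i r 2, U i r 3) (by simp [instI33E])

theorem U4_cases (hM : (instI33E B).IsMatching M) :
    M (U i r 4) = none ∨ M (U i r 4) = some (Y i r) ∨ M (U i r 4) = some (Hh i r 0) := by
  rcases h : M (U i r 4) with _ | hosp
  · exact Or.inl rfl
  · obtain ⟨-, hsingle, -, -⟩ := hM
    simpa [instI33E] using hsingle _ (by simp [instI33E]) _ h

theorem hospFree_Hh (hM : (instI33E B).IsMatching M) {s : Fin 4}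
    (h : ∀ t, M (U i r t) ≠ some (Hh i r s)) : HRC1.HospFree M (Hh i r s) := by
  intro res hres
  obtain ⟨t, rfl⟩ := eq_U_of_eq_Hh hM hres
  exact h t hres

theorem U4_ne_none (hM : (instI33E B).Stable M) : M (U i r 4) ≠ none := by
  obtain ⟨hmat, hbs, -⟩ := hM
  intro h4
  refine hbs (U i r 4) (Hh i r 0) ⟨by simp [instI33E], by simp [instI33E], Or.inl h4, ?_⟩
  by_cases hfree : HRC1.HospFree M (Hh i r 0)
  · exact Or.inl hfree
  obtain ⟨res, hres⟩ : ∃ res, M res = some (Hh i r 0) := by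
    simpa [HRC1.HospFree] using hfree
  obtain ⟨t, rfl⟩ := eq_U_of_eq_Hh hmat hres
  refine Or.inr ⟨_, hres, ?_⟩
  have := U01_cases hmat (i := i) (r := r)
  have := U23_cases hmat (i := i) (r := r)
  fin_cases t <;> simp_all [HRC1.Prefers, instI33E]

theorem U4_ne_Y (hM : (instI33E B).Stable M) : M (U i r 4) ≠ some (Y i r) := by
  obtain ⟨hmat, -, hbc⟩ := hM
  intro h4
  rcases U01_cases hmat (i := i) (r := r) with ⟨h0, h1⟩ | ⟨h0, h1⟩ <;>
    rcases U23_cases hmat (i := i) (r := r) with ⟨h2, h3⟩ | ⟨h2, h3⟩ | ⟨h2, h3⟩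
  · refine hbc (U i r 0, U i r 1) (Hh i r 0, Hh i r 1)
      ⟨by simp [instI33E], by simp [instI33E], Or.inl ⟨h0, h1⟩,
        Or.inr (Or.inl (hospFree_Hh hmat (by intro t; fin_cases t <;> simp [*]))),
        Or.inr (Or.inl (hospFree_Hh hmat (by intro t; fin_cases t <;> simp [*])))⟩
  · refine hbc (U i r 0, U i r 1) (Hh i r 0, Hh i r 1)
      ⟨by simp [instI33E], by simp [instI33E], Or.inl ⟨h0, h1⟩,
        Or.inr (Or.inr ⟨_, h2, by simp [HRC1.Prefers, instI33E]⟩),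
        Or.inr (Or.inl (hospFree_Hh hmat (by intro t; fin_cases t <;> simp [*])))⟩
  · refine hbc (U i r 2, U i r 3) (Hh i r 0, Hh i r 3)
      ⟨by simp [instI33E], by simp [instI33E],
        Or.inr ⟨(Hh i r 2, Hh i r 1), by simp [instI33E], h2, h3,
          by simp [HRC1.Prefers, instI33E]⟩,
        Or.inr (Or.inl (hospFree_Hh hmat (by intro t; fin_cases t <;> simp [*]))),
        Or.inr (Or.inl (hospFree_Hh hmat (by intro t; fin_cases t <;> simp [*])))⟩
  · refine hbc (U i r 2, U i r 3) (Hh i r 2, Hh i r 1)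
      ⟨by simp [instI33E], by simp [instI33E], Or.inl ⟨h2, h3⟩,
        Or.inr (Or.inl (hospFree_Hh hmat (by intro t; fin_cases t <;> simp [*]))),
        Or.inr (Or.inr ⟨_, h1, by simp [HRC1.Prefers, instI33E]⟩)⟩
  · simpa using hmat.1 _ _ _ h0 h2
  · simpa using hmat.1 _ _ _ h1 h3

theorem U4_eq_Hh0 (hM : (instI33E B).Stable M) : M (U i r 4) = some (Hh i r 0) :=
  (((U4_cases hM.1).resolve_left (U4_ne_none hM)).resolve_left (U4_ne_Y hM))

theorem exists_X_eq_Y (hM : (instI33E B).Stable M) :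
    ∃ a, M (X i a) = some (Y i r) ∧ M (K i a) = some (L i r) := by
  obtain ⟨res, hres⟩ : ∃ res, M res = some (Y i r) := by
    by_contra! hfree
    refine hM.2.1 (U i r 4) (Y i r) ⟨by simp [instI33E], by simp [instI33E],
      Or.inr ⟨_, U4_eq_Hh0 hM, by simp [HRC1.Prefers, instI33E]⟩, Or.inl hfree⟩
  rcases eq_U_or_X_of_eq_Y hM.1 hres with rfl | ⟨a, rfl, hK⟩
  · simp [U4_eq_Hh0 hM] at hres
  · exact ⟨a, hres, hK⟩

end instI33E

/-- In any stable matching `M` of the extended instance `I′₃₃(B)`, every hospital in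
`L ∪ Y` is matched and every resident in `K ∪ X` is matched. -/
theorem LY_and_KX_matched {n m : ℕ} (B : E3SAT n m)
    (M : Res3E n m → Option (Hos3E n m)) (hM : (instI33E B).Stable M) :
    (∀ (i : Fin n) (r : Fin 4), ∃ res, M res = some (Hos3E.L i r)) ∧
    (∀ (i : Fin n) (r : Fin 4), ∃ res, M res = some (Hos3E.Y i r)) ∧
    (∀ (i : Fin n) (r : Fin 4), (M (Res3E.K i r)).isSome) ∧
    (∀ (i : Fin n) (r : Fin 4), (M (Res3E.X i r)).isSome) := by
  choose a hX hK using fun i r => instI33E.exists_X_eq_Y (i := i) (r := r) hM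
  have ha : ∀ i, Function.Surjective (a i) := fun i =>
    Finite.surjective_of_injective fun r₁ r₂ h =>
      (Hos3E.Y.inj (Option.some.inj ((hX i r₁).symm.trans (h ▸ hX i r₂)))).2
  refine ⟨fun i r => ⟨_, hK i r⟩, fun i r => ⟨_, hX i r⟩, fun i b => ?_, fun i b => ?_⟩ <;>
    obtain ⟨r, rfl⟩ := ha i b
  · simp [hK]
  · simp [hX]
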